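/- If (b_1,…,b_r) is a sequence of integers with every b_i ≥ 2 whose Hirzebruch–Jung continued fraction equals d·n²/(d·n·a − 1) for integers d ≥ 1 and coprime n > a ≥ 1, then b_1 + b_2 + ⋯ + b_r = 3r + 2 − d. (This identity underlies the computation of K² of the surfaces obtained by contracting such chains and smoothing.) -/

import Mathlib

/-- Hirzebruch–Jung continued fraction of a list of integers:
`hj [b₁,…,b_r] = b₁ - 1/(b₂ - 1/(⋯ - 1/b_r))`.
(Since `1/0 = 0` in `ℚ`, `hj [b] = b`.) -/
def hj : List ℤ → ℚ
  | [] => 0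
  | b :: l => (b : ℚ) - 1 / hj l

/-- A nonempty sequence of integers, each `≥ 2`, is a T-chain datum if its
Hirzebruch–Jung continued fraction equals `d·n²/(d·n·a − 1)` for some integers
`d ≥ 1` and coprime `n > a ≥ 1`. -/
def IsTChainDatum (l : List ℤ) : Prop :=
  l ≠ [] ∧ (∀ b ∈ l, 2 ≤ b) ∧
    ∃ d n a : ℤ, 1 ≤ d ∧ 1 ≤ a ∧ a < n ∧ Int.gcd n a = 1 ∧
      hj l = (d * n ^ 2 : ℚ) / (d * n * a - 1)

/-!
With `M(b) = (b, -1; 1, 0)`, the product `M(b₁)⋯M(b_r)` has determinant `1` and first column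
`(p, q)`, where `[b₁,…,b_r] = p/q` in lowest terms; its second column is then forced by
`det = 1` and the bounds coming from `bᵢ ≥ 2`. For a T-chain of type `(d, n, a)` the product
is therefore the explicit matrix `tMatrix d n a`. Reversing the chain transposes the product
(up to signs) and turns `(d, n, a)` into `(d, n, n - a)`. If `n < 2a`, the chain is
`[2, b₂, …, b_r]` with `b_r ≥ 3`, and `[b₂, …, b_r - 1]` is a T-chain of type `(d, a, 2a - n)`:
one entry fewer and a sum smaller by `3`. The remaining case `n = 2a` forces `(n, a) = (2, 1)`,
where the chain is `[4]` or `[3, 2, …, 2, 3]`. Induction on `r` gives `∑ bᵢ - 3r = 2 - d`.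
-/

open Matrix

def hjMatrix (b : ℤ) : Matrix (Fin 2) (Fin 2) ℤ := !![b, -1; 1, 0]

def chainMatrix (l : List ℤ) : Matrix (Fin 2) (Fin 2) ℤ := (l.map hjMatrix).prod

@[simp] lemma chainMatrix_nil : chainMatrix [] = 1 := rfl

lemma chainMatrix_cons (b : ℤ) (l : List ℤ) :
    chainMatrix (b :: l) = hjMatrix b * chainMatrix l := rfl

lemma chainMatrix_append (l m : List ℤ) :
    chainMatrix (l ++ m) = chainMatrix l * chainMatrix m := by
  simp [chainMatrix]

lemma chainMatrix_singleton (b : ℤ) : chainMatrix [b] = hjMatrix b := by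
  simp [chainMatrix]

lemma chainMatrix_cons_zero_zero (b : ℤ) (l : List ℤ) :
    chainMatrix (b :: l) 0 0 = b * chainMatrix l 0 0 - chainMatrix l 1 0 := by
  rw [chainMatrix_cons, hjMatrix, eta_fin_two (chainMatrix l), mul_fin_two]
  simp; ring

lemma chainMatrix_cons_one_zero (b : ℤ) (l : List ℤ) :
    chainMatrix (b :: l) 1 0 = chainMatrix l 0 0 := by
  rw [chainMatrix_cons, hjMatrix, eta_fin_two (chainMatrix l), mul_fin_two]
  simp

lemma det_chainMatrix (l : List ℤ) : (chainMatrix l).det = 1 := by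
  induction l with
  | nil => simp
  | cons b l ih => rw [chainMatrix_cons, det_mul, ih, hjMatrix, det_fin_two_of]; ring

lemma chainMatrix_reverse (l : List ℤ) :
    chainMatrix l.reverse = !![1, 0; 0, -1] * (chainMatrix l)ᵀ * !![1, 0; 0, -1] := by
  induction l with
  | nil => ext i j; fin_cases i <;> fin_cases j <;> simp
  | cons b l ih =>
    have hT : (hjMatrix b)ᵀ = !![1, 0; 0, -1] * hjMatrix b * !![1, 0; 0, -1] := by
      ext i j; fin_cases i <;> fin_cases j <;> simp [hjMatrix]
    have hJ : !![(1 : ℤ), 0; 0, -1] * !![1, 0; 0, -1] = 1 := by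
      ext i j; fin_cases i <;> fin_cases j <;> simp
    rw [List.reverse_cons, chainMatrix_append, ih, chainMatrix_singleton, chainMatrix_cons,
      transpose_mul, hT]
    simp only [Matrix.mul_assoc, hJ, Matrix.mul_one]

lemma chainMatrix_reverse_zero_zero (l : List ℤ) :
    chainMatrix l.reverse 0 0 = chainMatrix l 0 0 := by
  simp only [chainMatrix_reverse, mul_apply, Fin.sum_univ_two, transpose_apply]
  simp

lemma chainMatrix_reverse_one_zero (l : List ℤ) :
    chainMatrix l.reverse 1 0 = -chainMatrix l 0 1 := by
  simp only [chainMatrix_reverse, mul_apply, Fin.sum_univ_two, transpose_apply]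
  simp

lemma chainMatrix_drop_two (m : List ℤ) (c : ℤ) :
    chainMatrix (m ++ [c - 1]) =
      !![0, 1; -1, 2] * chainMatrix (2 :: (m ++ [c])) * !![1, 0; 1, 1] := by
  have h2 : !![(0 : ℤ), 1; -1, 2] * hjMatrix 2 = 1 := by
    ext i j; fin_cases i <;> fin_cases j <;> simp [hjMatrix]
  have hc : hjMatrix c * !![1, 0; 1, 1] = hjMatrix (c - 1) := by
    ext i j; fin_cases i <;> fin_cases j <;> simp [hjMatrix]; ring
  rw [chainMatrix_cons, chainMatrix_append, chainMatrix_append, chainMatrix_singleton,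
    chainMatrix_singleton, ← Matrix.mul_assoc, h2, Matrix.one_mul, Matrix.mul_assoc, hc]

lemma chainMatrix_one_zero_bounds {l : List ℤ} (h2 : ∀ b ∈ l, 2 ≤ b) :
    0 ≤ chainMatrix l 1 0 ∧ chainMatrix l 1 0 < chainMatrix l 0 0 := by
  induction l with
  | nil => simp
  | cons b l ih =>
    obtain ⟨hq, hqp⟩ := ih fun x hx => h2 x (List.mem_cons_of_mem b hx)
    have hb : 0 ≤ (b - 2) * chainMatrix l 0 0 :=
      mul_nonneg (by linarith [h2 b (by simp)]) (by linarith)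
    rw [chainMatrix_cons_zero_zero, chainMatrix_cons_one_zero]
    constructor <;> linarith

lemma chainMatrix_zero_one_bounds {l : List ℤ} (h2 : ∀ b ∈ l, 2 ≤ b) :
    -chainMatrix l 0 0 < chainMatrix l 0 1 ∧ chainMatrix l 0 1 ≤ 0 := by
  have := chainMatrix_one_zero_bounds (l := l.reverse) (by simpa using h2)
  rw [chainMatrix_reverse_zero_zero, chainMatrix_reverse_one_zero] at this
  constructor <;> linarith

lemma one_le_chainMatrix_one_zero {l : List ℤ} (hne : l ≠ []) (h2 : ∀ b ∈ l, 2 ≤ b) :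
    1 ≤ chainMatrix l 1 0 := by
  obtain ⟨b, t, rfl⟩ := List.exists_cons_of_ne_nil hne
  have := chainMatrix_one_zero_bounds fun x hx => h2 x (List.mem_cons_of_mem b hx)
  rw [chainMatrix_cons_one_zero]
  linarith

lemma chainMatrix_cons_bounds {b : ℤ} {t : List ℤ} (h2 : ∀ x ∈ b :: t, 2 ≤ x) :
    (b - 1) * chainMatrix (b :: t) 1 0 < chainMatrix (b :: t) 0 0 ∧
      chainMatrix (b :: t) 0 0 ≤ b * chainMatrix (b :: t) 1 0 := by
  have := chainMatrix_one_zero_bounds fun x hx => h2 x (List.mem_cons_of_mem b hx)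
  rw [chainMatrix_cons_zero_zero, chainMatrix_cons_one_zero]
  constructor <;> linarith

lemma head_eq_of_chainMatrix_bounds {b c : ℤ} {t : List ℤ} (h2 : ∀ x ∈ b :: t, 2 ≤ x)
    (hlt : (c - 1) * chainMatrix (b :: t) 1 0 < chainMatrix (b :: t) 0 0)
    (hle : chainMatrix (b :: t) 0 0 ≤ c * chainMatrix (b :: t) 1 0) : b = c := by
  have hq := one_le_chainMatrix_one_zero (List.cons_ne_nil b t) h2
  obtain ⟨hblt, hble⟩ := chainMatrix_cons_bounds h2
  have h1 : b - 1 < c := lt_of_mul_lt_mul_right (hblt.trans_le hle) (by linarith)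
  have h2 : c - 1 < b := lt_of_mul_lt_mul_right (hlt.trans_le hble) (by linarith)
  omega

lemma hj_eq_div {l : List ℤ} (h2 : ∀ b ∈ l, 2 ≤ b) :
    hj l = (chainMatrix l 0 0 : ℚ) / chainMatrix l 1 0 := by
  induction l with
  | nil => simp [hj]
  | cons b l ih =>
    have h2' : ∀ x ∈ l, 2 ≤ x := fun x hx => h2 x (List.mem_cons_of_mem b hx)
    have hp : (chainMatrix l 0 0 : ℚ) ≠ 0 := by
      have := chainMatrix_one_zero_bounds h2'
      exact_mod_cast (by linarith : chainMatrix l 0 0 ≠ 0)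
    rw [hj, ih h2', chainMatrix_cons_zero_zero, chainMatrix_cons_one_zero]
    push_cast
    field_simp

lemma isCoprime_chainMatrix_col_zero (l : List ℤ) :
    IsCoprime (chainMatrix l 0 0) (chainMatrix l 1 0) := by
  have hdet := det_chainMatrix l
  rw [det_fin_two] at hdet
  exact ⟨chainMatrix l 1 1, -chainMatrix l 0 1, by linear_combination hdet⟩

lemma chainMatrix_eq_of_col_zero_eq {l : List ℤ} (h2 : ∀ b ∈ l, 2 ≤ b)
    {N : Matrix (Fin 2) (Fin 2) ℤ} (hdet : N.det = 1)
    (h00 : N 0 0 = chainMatrix l 0 0) (h10 : N 1 0 = chainMatrix l 1 0)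
    (hlt : -N 0 0 < N 0 1) (hle : N 0 1 ≤ 0) : chainMatrix l = N := by
  set M := chainMatrix l
  have hdetM : M.det = 1 := det_chainMatrix l
  rw [det_fin_two] at hdet hdetM
  obtain ⟨hMlt, hMle⟩ := chainMatrix_zero_one_bounds h2
  have hdvd : M 0 0 ∣ M 1 0 * (M 0 1 - N 0 1) :=
    ⟨M 1 1 - N 1 1, by rw [← h00, ← h10] at hdetM ⊢; linear_combination hdet - hdetM⟩
  have h01 : M 0 1 = N 0 1 := by
    have hdvd' := (isCoprime_chainMatrix_col_zero l).dvd_of_dvd_mul_left hdvd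
    have := Int.eq_zero_of_abs_lt_dvd hdvd' (by rw [abs_lt]; constructor <;> linarith)
    linarith
  have h11 : M 1 1 = N 1 1 := by
    have hp : M 0 0 ≠ 0 := by linarith
    apply mul_left_cancel₀ hp
    rw [h00, h10, ← h01] at hdet
    linear_combination hdetM - hdet
  ext i j
  fin_cases i <;> fin_cases j
  exacts [h00.symm, h01, h10.symm, h11]

lemma eq_nil_of_chainMatrix_one_zero_eq_zero {l : List ℤ} (h2 : ∀ b ∈ l, 2 ≤ b)
    (h : chainMatrix l 1 0 = 0) : l = [] := by
  by_contra hne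
  have := one_le_chainMatrix_one_zero hne h2
  omega

def tMatrix (d n a : ℤ) : Matrix (Fin 2) (Fin 2) ℤ :=
  !![d * n ^ 2, 1 - d * n * (n - a); d * n * a - 1, 1 - d * a * (n - a)]

lemma det_tMatrix (d n a : ℤ) : (tMatrix d n a).det = 1 := by
  rw [tMatrix, det_fin_two_of]; ring

lemma tMatrix_reverse (d n a : ℤ) :
    !![1, 0; 0, -1] * (tMatrix d n a)ᵀ * !![1, 0; 0, -1] = tMatrix d n (n - a) := by
  rw [eta_fin_two (tMatrix d n a)ᵀ, mul_fin_two, mul_fin_two]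
  simp only [transpose_apply, tMatrix, of_apply, cons_val', cons_val_zero, cons_val_one,
    empty_val', cons_val_fin_one]
  congr 1; ring_nf

lemma tMatrix_drop_two (d n a : ℤ) :
    !![0, 1; -1, 2] * tMatrix d n a * !![1, 0; 1, 1] = tMatrix d a (2 * a - n) := by
  rw [tMatrix, tMatrix, mul_fin_two, mul_fin_two]
  congr 1; ring_nf

lemma sum_and_length_of_chainMatrix_col_zero_eq :
    ∀ {l : List ℤ} {k : ℤ}, (∀ b ∈ l, 2 ≤ b) → 1 ≤ k →
      chainMatrix l 0 0 = 2 * k + 1 → chainMatrix l 1 0 = 2 * k - 1 →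
      l.sum = 2 * k + 1 ∧ (l.length : ℤ) = k
  | [], k, _, hk, hp, _ => by simp at hp; omega
  | b :: t, k, h2, hk, hp, hq => by
    have h2t : ∀ x ∈ t, 2 ≤ x := fun x hx => h2 x (List.mem_cons_of_mem b hx)
    have hpt : chainMatrix t 0 0 = 2 * k - 1 := by rw [← chainMatrix_cons_one_zero b, hq]
    have hqt : chainMatrix t 1 0 = b * (2 * k - 1) - (2 * k + 1) := by
      rw [← hpt, ← hp, chainMatrix_cons_zero_zero]; ring
    obtain rfl | hk2 := eq_or_lt_of_le hk
    · obtain rfl : b = 3 := head_eq_of_chainMatrix_bounds h2 (by omega) (by omega)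
      obtain rfl : t = [] := eq_nil_of_chainMatrix_one_zero_eq_zero h2t (by omega)
      simp
    · obtain rfl : b = 2 := head_eq_of_chainMatrix_bounds h2 (by omega) (by omega)
      obtain ⟨hsum, hlen⟩ :=
        sum_and_length_of_chainMatrix_col_zero_eq h2t (k := k - 1) (by omega) (by omega) (by omega)
      simp only [List.sum_cons, List.length_cons]
      push_cast
      omega

lemma sum_eq_of_chainMatrix_eq_tMatrix_two_one {l : List ℤ} {d : ℤ} (h2 : ∀ b ∈ l, 2 ≤ b)
    (hd : 1 ≤ d) (hl : chainMatrix l = tMatrix d 2 1) : l.sum = 3 * (l.length : ℤ) + 2 - d := by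
  have hp : chainMatrix l 0 0 = 4 * d := by simp [hl, tMatrix]; ring
  have hq : chainMatrix l 1 0 = 2 * d - 1 := by simp [hl, tMatrix]; ring
  obtain _ | ⟨b, t⟩ := l
  · simp at hp; omega
  have h2t : ∀ x ∈ t, 2 ≤ x := fun x hx => h2 x (List.mem_cons_of_mem b hx)
  have hpt : chainMatrix t 0 0 = 2 * d - 1 := by rw [← chainMatrix_cons_one_zero b, hq]
  have hqt : chainMatrix t 1 0 = b * (2 * d - 1) - 4 * d := by
    rw [← hpt, ← hp, chainMatrix_cons_zero_zero]; ring
  obtain rfl | hd2 := eq_or_lt_of_le hd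
  · obtain rfl : b = 4 := head_eq_of_chainMatrix_bounds h2 (by omega) (by omega)
    obtain rfl : t = [] := eq_nil_of_chainMatrix_one_zero_eq_zero h2t (by omega)
    simp
  · obtain rfl : b = 3 := head_eq_of_chainMatrix_bounds h2 (by omega) (by omega)
    obtain ⟨hsum, hlen⟩ :=
      sum_and_length_of_chainMatrix_col_zero_eq h2t (k := d - 1) (by omega) (by omega) (by omega)
    simp only [List.sum_cons, List.length_cons]
    push_cast
    omega

lemma chainMatrix_eq_tMatrix {l : List ℤ} {d n a : ℤ} (h2 : ∀ b ∈ l, 2 ≤ b) (hd : 1 ≤ d)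
    (ha : 1 ≤ a) (han : a < n) (hhj : hj l = (d * n ^ 2 : ℚ) / (d * n * a - 1)) :
    chainMatrix l = tMatrix d n a := by
  have hdn : 2 ≤ d * n := by nlinarith
  have hdna : 2 ≤ d * n * a := by nlinarith
  have hdnn : d * n * a < d * n * n := by nlinarith
  have hcop : IsCoprime (d * n ^ 2) (d * n * a - 1) :=
    ⟨1 - d * a * (n - a), d * n * (n - a) - 1, by ring⟩
  rw [hj_eq_div h2] at hhj
  have hq : 0 < chainMatrix l 1 0 := by
    refine lt_of_le_of_ne (chainMatrix_one_zero_bounds h2).1 fun h0 => ?_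
    rw [← h0, Int.cast_zero, div_zero, eq_comm, div_eq_zero_iff] at hhj
    rcases hhj with h | h <;> norm_cast at h <;> nlinarith
  obtain ⟨hp, hq⟩ := Rat.div_int_inj hq (by omega)
    (Int.isCoprime_iff_gcd_eq_one.mp (isCoprime_chainMatrix_col_zero l))
    (Int.isCoprime_iff_gcd_eq_one.mp hcop) (by push_cast; exact hhj)
  refine chainMatrix_eq_of_col_zero_eq h2 (det_tMatrix d n a) (by simp [tMatrix, hp])
    (by simp [tMatrix, hq]) ?_ ?_ <;> simp [tMatrix] <;> nlinarith

lemma exists_eq_two_cons_append_of_chainMatrix_eq_tMatrix {l : List ℤ} {d n a : ℤ}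
    (h2 : ∀ b ∈ l, 2 ≤ b) (hd : 1 ≤ d) (han : a < n) (h2a : n < 2 * a)
    (hl : chainMatrix l = tMatrix d n a) : ∃ m c, l = 2 :: (m ++ [c]) ∧ 3 ≤ c := by
  have hdn : 3 ≤ d * n := by nlinarith
  have hp : chainMatrix l 0 0 = d * n ^ 2 := by simp [hl, tMatrix]
  obtain _ | ⟨b, t⟩ := l
  · simp at hp; nlinarith
  obtain rfl : b = 2 := by
    refine head_eq_of_chainMatrix_bounds h2 ?_ ?_ <;> simp [hl, tMatrix] <;> nlinarith
  obtain rfl | ⟨m, c, rfl⟩ := List.eq_nil_or_concat' t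
  · simp [chainMatrix_singleton, hjMatrix] at hp; nlinarith
  refine ⟨m, c, rfl, ?_⟩
  have hrev : (2 :: (m ++ [c])).reverse = c :: (m.reverse ++ [2]) := by simp
  have hr := chainMatrix_reverse (2 :: (m ++ [c]))
  rw [hl, tMatrix_reverse, hrev] at hr
  have h2r : ∀ x ∈ c :: (m.reverse ++ [2]), 2 ≤ x :=
    fun x hx => h2 x (List.mem_reverse.mp (hrev ▸ hx))
  have hle := (chainMatrix_cons_bounds h2r).2
  rw [hr] at hle
  simp only [tMatrix, of_apply, cons_val', cons_val_zero, cons_val_one, empty_val',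
    cons_val_fin_one] at hle
  have hq : 0 ≤ d * n * (n - a) - 1 := by nlinarith
  by_contra hc
  nlinarith [mul_le_mul_of_nonneg_right (by omega : c ≤ 2) hq]

lemma exists_shorter_of_chainMatrix_eq_tMatrix {l : List ℤ} {d n a : ℤ}
    (h2 : ∀ b ∈ l, 2 ≤ b) (hd : 1 ≤ d) (han : a < n) (h2a : n < 2 * a)
    (hl : chainMatrix l = tMatrix d n a) :
    ∃ l' : List ℤ, (∀ b ∈ l', 2 ≤ b) ∧ l'.length + 1 = l.length ∧
      l'.sum + 3 = l.sum ∧ chainMatrix l' = tMatrix d a (2 * a - n) := by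
  obtain ⟨m, c, rfl, hc⟩ :=
    exists_eq_two_cons_append_of_chainMatrix_eq_tMatrix h2 hd han h2a hl
  refine ⟨m ++ [c - 1], ?_, by simp, by simp; ring, ?_⟩
  · simp only [List.mem_append, List.mem_singleton]
    rintro x (hx | rfl)
    · exact h2 x (by simp [hx])
    · omega
  · rw [chainMatrix_drop_two, hl, tMatrix_drop_two]

theorem sum_eq_of_chainMatrix_eq_tMatrix {d : ℤ} (hd : 1 ≤ d) (l : List ℤ) :
    ∀ {n a : ℤ}, (∀ b ∈ l, 2 ≤ b) → 1 ≤ a → a < n → IsCoprime n a →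
      chainMatrix l = tMatrix d n a → l.sum = 3 * (l.length : ℤ) + 2 - d := by
  induction hL : l.length using Nat.strong_induction_on generalizing l with
  | _ L ih =>
  have reduce : ∀ {l : List ℤ} {n a : ℤ}, l.length = L → (∀ b ∈ l, 2 ≤ b) → 1 ≤ a →
      a < n → IsCoprime n a → n < 2 * a → chainMatrix l = tMatrix d n a →
      l.sum = 3 * (l.length : ℤ) + 2 - d := by
    intro l n a hlen h2 ha han hcop h2a hl
    obtain ⟨l', h2', hlen', hsum', hl'⟩ :=
      exists_shorter_of_chainMatrix_eq_tMatrix h2 hd han h2a hl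
    have hcop' : IsCoprime a (2 * a - n) := by
      have := hcop.symm.neg_right.add_mul_left_right 2
      rwa [neg_add_eq_sub, mul_comm] at this
    have := ih l'.length (by omega) l' rfl h2' (by omega) (by omega) hcop' hl'
    omega
  intro n a h2 ha han hcop hl
  rw [← hL]
  rcases lt_trichotomy n (2 * a) with h2a | rfl | h2a
  · exact reduce hL h2 ha han hcop h2a hl
  · obtain rfl : a = 1 := by
      have := hcop.isUnit_of_dvd' (dvd_mul_left a 2) dvd_rfl
      rw [Int.isUnit_iff] at this; omega
    exact sum_eq_of_chainMatrix_eq_tMatrix_two_one h2 hd hl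
  · have hrev : chainMatrix l.reverse = tMatrix d n (n - a) := by
      rw [chainMatrix_reverse, hl, tMatrix_reverse]
    have hcop' : IsCoprime n (n - a) := by
      have := hcop.neg_right.add_mul_left_right 1
      rwa [neg_add_eq_sub, mul_one] at this
    simpa using reduce (by simpa using hL) (by simpa using h2) (by omega) (by omega) hcop'
      (by omega) hrev

theorem stmt6_general (l : List ℤ) (h2 : ∀ b ∈ l, 2 ≤ b)
    (d n a : ℤ) (hd : 1 ≤ d) (ha : 1 ≤ a) (han : a < n) (hcop : Int.gcd n a = 1)
    (hhj : hj l = (d * n ^ 2 : ℚ) / (d * n * a - 1)) :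
    l.sum = 3 * (l.length : ℤ) + 2 - d :=
  sum_eq_of_chainMatrix_eq_tMatrix hd l h2 ha han (Int.isCoprime_iff_gcd_eq_one.mpr hcop)
    (chainMatrix_eq_tMatrix h2 hd ha han hhj)

/-- If `(b₁,…,b_r)` has all entries `≥ 2` and HJ continued fraction
`d·n²/(d·n·a − 1)` with `d ≥ 1`, coprime `n > a ≥ 1`, then
`b₁ + ⋯ + b_r = 3r + 2 − d`. -/
theorem stmt6 (l : List ℤ) (hne : l ≠ []) (h2 : ∀ b ∈ l, 2 ≤ b)
    (d n a : ℤ) (hd : 1 ≤ d) (ha : 1 ≤ a) (han : a < n) (hcop : Int.gcd n a = 1)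
    (hhj : hj l = (d * n ^ 2 : ℚ) / (d * n * a - 1)) :
    l.sum = 3 * (l.length : ℤ) + 2 - d :=
  stmt6_general l h2 d n a hd ha han hcop hhj
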